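/- Let S be a propagator on nested Banach spaces (H_γ) satisfying ‖S_{s,t}u - u‖_{γ1} ≤ C|t-s|^{γ2-γ1} ‖u‖_{γ2} for γ1 ≤ γ2 ≤ γ1 + 1. Let Y : [0,T] → H_γ and Y' : [0,T] → L(ℝ^e, H_{γ-β}) be stochastic processes with sup_t ‖Y_t‖_{m,γ} ≤ M₀ and sup_t ‖Y'_t‖_{m,γ-β} ≤ M₁, and let X be α-Hölder with X_0 = 0, 0 < β' ≤ β ≤ α < 1. Define R^Y_{s,t} := δY_{s,t} - Y'_s δX_{s,t} and R̂^Y_{s,t} := Y_t - S_{s,t}Y_s - S_{s,t}Y'_s δX_{s,t}. Then ‖R^Y_{s,t} - R̂^Y_{s,t}‖_{m, γ-β-β'} ≤ C'(M₀ + M₁ |δX|_α T^{α-β}) |t-s|^{β+β'} for all (s,t) ∈ Δ₂. -/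

import Mathlib

open MeasureTheory ENNReal

/-!
Both remainders share `Y_t`, so their difference is
`(S_{s,t} - 1) Y_s + ∑ᵢ δXⁱ_{s,t} (S_{s,t} - 1) Y'ⁱ_s`. The smoothing estimate trades the
`β + β'` units of regularity between `γ` and `γ - β - β'` for the factor `|t-s|^{β+β'}` in the
first term, and the `β'` units between `γ - β` and `γ - β - β'` for `|t-s|^{β'}` in the second,
where `|δX_{s,t}| ≤ |δX|_α |t-s|^α ≤ |δX|_α T^{α-β} |t-s|^β` supplies the rest. Minkowski's
inequality in `L^m` then sums the pieces.
-/

lemma LinearMap.remainder_sub_mildRemainder {R V ι : Type*} [Semiring R] [AddCommGroup V]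
    [Module R V] [Fintype ι] (A : V →ₗ[R] V) (y₀ y₁ : V) (y' : ι → V) (x : ι → R) :
    (y₁ - y₀ - ∑ i, x i • y' i) - (y₁ - A y₀ - ∑ i, x i • A (y' i))
      = (A y₀ - y₀) + ∑ i, x i • (A (y' i) - y' i) := by
  simp only [smul_sub, Finset.sum_sub_distrib]
  abel

lemma Seminorm.map_add_sum_smul_le {𝕜 V ι : Type*} [NormedField 𝕜] [AddCommGroup V]
    [Module 𝕜 V] [Fintype ι] (q : Seminorm 𝕜 V) (v : V) (x : ι → 𝕜) (w : ι → V) :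
    q (v + ∑ i, x i • w i) ≤ q v + ∑ i, ‖x i‖ * q (w i) := by
  refine (map_add_le_add q _ _).trans (add_le_add_right ?_ _)
  calc q (∑ i, x i • w i) ≤ ∑ i, q (x i • w i) :=
        Finset.le_sum_of_subadditive q (map_zero q).le (map_add_le_add q) _ _
    _ = ∑ i, ‖x i‖ * q (w i) := by simp only [map_smul_eq_mul]

lemma Real.rpow_le_rpow_sub_mul_rpow {h T α β : ℝ} (hh : 0 ≤ h) (hhT : h ≤ T) (hβ : 0 ≤ β)
    (hβα : β ≤ α) :
    h ^ α ≤ T ^ (α - β) * h ^ β := by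
  have hαβ : 0 ≤ α - β := sub_nonneg.mpr hβα
  calc h ^ α = h ^ (α - β) * h ^ β := by
        rw [← Real.rpow_add_of_nonneg hh hαβ hβ, sub_add_cancel]
    _ ≤ T ^ (α - β) * h ^ β := by gcongr

section eLpNorm

variable {Ω E : Type*} [MeasurableSpace Ω] {μ : Measure Ω} [NormedAddCommGroup E]
  {p : ℝ≥0∞}

lemma eLpNorm_le_ofReal_mul_of_le_mul {f : Ω → E} {g : Ω → ℝ} {c M : ℝ} (hc : 0 ≤ c)
    (hfg : ∀ ω, ‖f ω‖ ≤ c * g ω) (hg : eLpNorm g p μ ≤ ENNReal.ofReal M) :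
    eLpNorm f p μ ≤ ENNReal.ofReal (c * M) := by
  have hfg' : ∀ᵐ ω ∂μ, ‖f ω‖ ≤ c * ‖g ω‖ :=
    .of_forall fun ω => (hfg ω).trans (by gcongr; exact Real.le_norm_self _)
  calc eLpNorm f p μ ≤ ENNReal.ofReal c * eLpNorm g p μ :=
        eLpNorm_le_mul_eLpNorm_of_ae_le_mul hfg' p
    _ ≤ ENNReal.ofReal (c * M) := by
        rw [ENNReal.ofReal_mul hc]
        gcongr

lemma eLpNorm_add_sum_le_ofReal {ι : Type*} [Fintype ι] (hp : 1 ≤ p) {f₀ : Ω → E}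
    {f : ι → Ω → E} (hf₀ : AEStronglyMeasurable f₀ μ) (hf : ∀ i, AEStronglyMeasurable (f i) μ)
    {a b : ℝ} (ha : 0 ≤ a) (hb : 0 ≤ b) (h₀ : eLpNorm f₀ p μ ≤ ENNReal.ofReal a)
    (h : ∀ i, eLpNorm (f i) p μ ≤ ENNReal.ofReal b) :
    eLpNorm (fun ω => f₀ ω + ∑ i, f i ω) p μ ≤ ENNReal.ofReal (a + Fintype.card ι * b) := by
  have hsum : eLpNorm (∑ i, f i) p μ ≤ ENNReal.ofReal (Fintype.card ι * b) :=
    calc eLpNorm (∑ i, f i) p μ ≤ ∑ i, eLpNorm (f i) p μ :=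
          eLpNorm_sum_le (fun i _ => hf i) hp
      _ ≤ ∑ _i : ι, ENNReal.ofReal b := Finset.sum_le_sum fun i _ => h i
      _ = ENNReal.ofReal (Fintype.card ι * b) := by
          rw [Finset.sum_const, nsmul_eq_mul, ENNReal.ofReal_mul (Nat.cast_nonneg _),
            ENNReal.ofReal_natCast, Finset.card_univ]
  have hfun : (fun ω => f₀ ω + ∑ i, f i ω) = f₀ + ∑ i, f i := by
    ext ω
    simp only [Pi.add_apply, Finset.sum_apply]
  rw [hfun, ENNReal.ofReal_add ha (by positivity)]
  exact (eLpNorm_add_le hf₀ (Finset.aestronglyMeasurable_sum _ fun i _ => hf i) hp).trans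
    (add_le_add h₀ hsum)

lemma eLpNorm_remainder_sub_mildRemainder_le {V ι : Type*} [AddCommGroup V] [Module ℝ V]
    [Fintype ι] (hp : 1 ≤ p) {na nb nc : Seminorm ℝ V} {A : V →ₗ[ℝ] V} {K₀ K₁ L M₀ M₁ : ℝ}
    (hK₀ : 0 ≤ K₀) (hK₁ : 0 ≤ K₁) (hL : 0 ≤ L) (hM₀ : 0 ≤ M₀) (hM₁ : 0 ≤ M₁)
    (hA₀ : ∀ u, na (A u - u) ≤ K₀ * nc u) (hA₁ : ∀ u, na (A u - u) ≤ K₁ * nb u)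
    {x : ι → ℝ} (hx : ∀ i, ‖x i‖ ≤ L) {Y₀ Y₁ : Ω → V} {Y' : Ω → ι → V}
    (hY₀ : eLpNorm (fun ω => nc (Y₀ ω)) p μ ≤ ENNReal.ofReal M₀)
    (hY' : ∀ i, eLpNorm (fun ω => nb (Y' ω i)) p μ ≤ ENNReal.ofReal M₁)
    (hmeas₀ : AEStronglyMeasurable (fun ω => na (A (Y₀ ω) - Y₀ ω)) μ)
    (hmeas' : ∀ i, AEStronglyMeasurable (fun ω => na (A (Y' ω i) - Y' ω i)) μ) :
    eLpNorm (fun ω => na ((Y₁ ω - Y₀ ω - ∑ i, x i • Y' ω i)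
        - (Y₁ ω - A (Y₀ ω) - ∑ i, x i • A (Y' ω i)))) p μ
      ≤ ENNReal.ofReal (K₀ * M₀ + Fintype.card ι * (L * K₁ * M₁)) := by
  have hA₁' : ∀ i u, ‖x i‖ * na (A u - u) ≤ L * K₁ * nb u := fun i u =>
    calc _ ≤ L * (K₁ * nb u) := mul_le_mul (hx i) (hA₁ u) (apply_nonneg _ _) hL
      _ = L * K₁ * nb u := (mul_assoc _ _ _).symm
  have hbound₀ : eLpNorm (fun ω => na (A (Y₀ ω) - Y₀ ω)) p μ ≤ ENNReal.ofReal (K₀ * M₀) :=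
    eLpNorm_le_ofReal_mul_of_le_mul hK₀
      (fun ω => (Real.norm_of_nonneg (by positivity)).trans_le (hA₀ _)) hY₀
  have hbound₁ : ∀ i, eLpNorm (fun ω => ‖x i‖ * na (A (Y' ω i) - Y' ω i)) p μ
      ≤ ENNReal.ofReal (L * K₁ * M₁) := fun i =>
    eLpNorm_le_ofReal_mul_of_le_mul (by positivity)
      (fun ω => (Real.norm_of_nonneg (by positivity)).trans_le (hA₁' i _)) (hY' i)
  calc _ ≤ eLpNorm (fun ω => na (A (Y₀ ω) - Y₀ ω)
          + ∑ i, ‖x i‖ * na (A (Y' ω i) - Y' ω i)) p μ := by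
        refine eLpNorm_mono_real fun ω => ?_
        rw [Real.norm_of_nonneg (apply_nonneg na _), LinearMap.remainder_sub_mildRemainder]
        exact Seminorm.map_add_sum_smul_le ..
    _ ≤ _ := eLpNorm_add_sum_le_ofReal hp hmeas₀ (fun i => (hmeas' i).const_mul _)
          (by positivity) (by positivity) hbound₀ hbound₁

end eLpNorm

theorem stmt7_general {Ω V : Type*} [MeasurableSpace Ω] (μ : Measure Ω)
    [NormedAddCommGroup V] [NormedSpace ℝ V]
    (T m α β β' CS M₀ M₁ HX : ℝ) (e : ℕ)
    (hm : 2 ≤ m) (hβ' : 0 < β') (hββ : β' ≤ β) (hβα : β ≤ α)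
    (hCS : 0 < CS) (hM₀ : 0 ≤ M₀) (hM₁ : 0 ≤ M₁) (hHX : 0 ≤ HX)
    -- the norms `|·|_{γ-β-β'}`, `|·|_{γ-β}`, `|·|_γ` of the monotone family
    (na nb nc : Seminorm ℝ V)
    (S : ℝ → ℝ → V →ₗ[ℝ] V)
    -- smoothing estimates `‖S_{s,t}u - u‖_{γ1} ≤ C|t-s|^{γ2-γ1}‖u‖_{γ2}` for the two
    -- index pairs `(γ-β-β', γ)` and `(γ-β-β', γ-β)`
    (hS1 : ∀ s t u, 0 ≤ s → s ≤ t → t ≤ T → na (S s t u - u) ≤ CS * (t - s) ^ (β + β') * nc u)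
    (hS2 : ∀ s t u, 0 ≤ s → s ≤ t → t ≤ T → na (S s t u - u) ≤ CS * (t - s) ^ β' * nb u)
    (X : ℝ → Fin e → ℝ)
    (hXhol : ∀ s t i, 0 ≤ s → s ≤ t → t ≤ T → |X t i - X s i| ≤ HX * (t - s) ^ α)
    (Y : ℝ → Ω → V) (Y' : ℝ → Ω → Fin e → V)
    (hY : ∀ t, 0 ≤ t → t ≤ T →
      eLpNorm (fun ω => nc (Y t ω)) (ENNReal.ofReal m) μ ≤ ENNReal.ofReal M₀)
    (hY' : ∀ t i, 0 ≤ t → t ≤ T →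
      eLpNorm (fun ω => nb (Y' t ω i)) (ENNReal.ofReal m) μ ≤ ENNReal.ofReal M₁)
    (hmeas1 : ∀ s t : ℝ, AEStronglyMeasurable (fun ω => na (S s t (Y s ω) - Y s ω)) μ)
    (hmeas2 : ∀ (s t : ℝ) (i : Fin e),
      AEStronglyMeasurable (fun ω => na (S s t (Y' s ω i) - Y' s ω i)) μ) :
    ∃ C' > 0, ∀ s t, 0 ≤ s → s ≤ t → t ≤ T →
      eLpNorm (fun ω =>
          na ((Y t ω - Y s ω - ∑ i, (X t i - X s i) • Y' s ω i)
            - (Y t ω - S s t (Y s ω) - ∑ i, (X t i - X s i) • S s t (Y' s ω i))))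
        (ENNReal.ofReal m) μ
      ≤ ENNReal.ofReal (C' * (M₀ + M₁ * HX * T ^ (α - β)) * (t - s) ^ (β + β')) := by
  have hp : 1 ≤ ENNReal.ofReal m := ENNReal.one_le_ofReal.mpr (by linarith)
  refine ⟨CS * (e + 1), by positivity, fun s t hs hst htT => ?_⟩
  have hts : 0 ≤ t - s := sub_nonneg.mpr hst
  have hsT : s ≤ T := hst.trans htT
  have hβ : 0 ≤ β := hβ'.le.trans hββ
  have hTα : 0 ≤ T ^ (α - β) := Real.rpow_nonneg (hs.trans hsT) _
  have hδX : ∀ i, ‖X t i - X s i‖ ≤ HX * T ^ (α - β) * (t - s) ^ β := fun i => by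
    rw [Real.norm_eq_abs, mul_assoc]
    exact (hXhol s t i hs hst htT).trans <| by
      gcongr; exact Real.rpow_le_rpow_sub_mul_rpow hts (by linarith) hβ hβα
  refine (eLpNorm_remainder_sub_mildRemainder_le hp (by positivity) (by positivity)
    (by positivity) hM₀ hM₁ (hS1 s t · hs hst htT) (hS2 s t · hs hst htT) hδX (hY s hs hsT)
    (fun i => hY' s i hs hsT) (hmeas1 s t) (hmeas2 s t)).trans (ENNReal.ofReal_le_ofReal ?_)
  rw [Fintype.card_fin, Real.rpow_add_of_nonneg hts hβ hβ'.le]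
  have hM₀' : 0 ≤ CS * (t - s) ^ β * (t - s) ^ β' * M₀ := by positivity
  have hM₁' : 0 ≤ CS * (t - s) ^ β * (t - s) ^ β' * (M₁ * HX * T ^ (α - β)) := by positivity
  nlinarith [mul_nonneg (Nat.cast_nonneg e : (0:ℝ) ≤ e) hM₀']

/-- Comparison of the controlled-path remainder `R^Y` and the mild remainder `R̂^Y`:
`‖R^Y_{s,t} - R̂^Y_{s,t}‖_{m,γ-β-β'} ≲ (M₀ + M₁ |δX|_α T^{α-β}) |t-s|^{β+β'}`. -/
theorem stmt7 {Ω V : Type*} [MeasurableSpace Ω] (μ : Measure Ω) [IsProbabilityMeasure μ]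
    [NormedAddCommGroup V] [NormedSpace ℝ V]
    (T m α β β' CS M₀ M₁ HX : ℝ) (e : ℕ)
    (hT : 0 < T) (hm : 2 ≤ m) (hβ' : 0 < β') (hββ : β' ≤ β) (hβα : β ≤ α) (hα : α < 1)
    (hCS : 0 < CS) (hM₀ : 0 ≤ M₀) (hM₁ : 0 ≤ M₁) (hHX : 0 ≤ HX)
    -- the norms `|·|_{γ-β-β'}`, `|·|_{γ-β}`, `|·|_γ` of the monotone family
    (na nb nc : Seminorm ℝ V)
    (S : ℝ → ℝ → V →ₗ[ℝ] V)
    -- smoothing estimates `‖S_{s,t}u - u‖_{γ1} ≤ C|t-s|^{γ2-γ1}‖u‖_{γ2}` for the two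
    -- index pairs `(γ-β-β', γ)` and `(γ-β-β', γ-β)`
    (hS1 : ∀ s t u, 0 ≤ s → s ≤ t → t ≤ T → na (S s t u - u) ≤ CS * (t - s) ^ (β + β') * nc u)
    (hS2 : ∀ s t u, 0 ≤ s → s ≤ t → t ≤ T → na (S s t u - u) ≤ CS * (t - s) ^ β' * nb u)
    (X : ℝ → Fin e → ℝ) (hX0 : ∀ i, X 0 i = 0)
    (hXhol : ∀ s t i, 0 ≤ s → s ≤ t → t ≤ T → |X t i - X s i| ≤ HX * (t - s) ^ α)
    (Y : ℝ → Ω → V) (Y' : ℝ → Ω → Fin e → V)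
    (hY : ∀ t, 0 ≤ t → t ≤ T →
      eLpNorm (fun ω => nc (Y t ω)) (ENNReal.ofReal m) μ ≤ ENNReal.ofReal M₀)
    (hY' : ∀ t i, 0 ≤ t → t ≤ T →
      eLpNorm (fun ω => nb (Y' t ω i)) (ENNReal.ofReal m) μ ≤ ENNReal.ofReal M₁)
    (hmeas1 : ∀ s t : ℝ, AEStronglyMeasurable (fun ω => na (S s t (Y s ω) - Y s ω)) μ)
    (hmeas2 : ∀ (s t : ℝ) (i : Fin e),
      AEStronglyMeasurable (fun ω => na (S s t (Y' s ω i) - Y' s ω i)) μ) :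
    ∃ C' > 0, ∀ s t, 0 ≤ s → s ≤ t → t ≤ T →
      eLpNorm (fun ω =>
          na ((Y t ω - Y s ω - ∑ i, (X t i - X s i) • Y' s ω i)
            - (Y t ω - S s t (Y s ω) - ∑ i, (X t i - X s i) • S s t (Y' s ω i))))
        (ENNReal.ofReal m) μ
      ≤ ENNReal.ofReal (C' * (M₀ + M₁ * HX * T ^ (α - β)) * (t - s) ^ (β + β')) :=
  stmt7_general μ T m α β β' CS M₀ M₁ HX e hm hβ' hββ hβα hCS hM₀ hM₁ hHX na nb nc S hS1 hS2 X hXhol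
    Y Y' hY hY' hmeas1 hmeas2
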